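/- For every integer k ≥ 1, the generating polynomials for Schur-coloured partitions satisfy G_{k_{ab}}(q;a,b) = G_{(k−1)_b}(q;a,b) + a b q^k G_{(k−2)_b}(q;a,b). -/

import Mathlib

/-- The three colours of Alladi and Gordon's weighted-words Schur theorem. -/
inductive SchurColor : Type
  | ab | a | b
  deriving DecidableEq

open SchurColor

/-- The order on colours: ab < a < b, encoded by an index. -/
def schurColorIdx : SchurColor → ℕ
  | ab => 0 | a => 1 | b => 2

/-- A Schur-coloured partition: a finite sequence of coloured positive integers with no
part 1_{ab}, where consecutive parts differ by at least 2 if the colour of the larger one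
is ab or is strictly smaller than the colour of the next one, and by at least 1
otherwise. -/
def IsSchurColoured (l : List (ℕ × SchurColor)) : Prop :=
  (∀ p ∈ l, 0 < p.1 ∧ ¬(p.1 = 1 ∧ p.2 = ab)) ∧
    l.Chain' (fun p q =>
      q.1 + (if p.2 = ab ∨ schurColorIdx p.2 < schurColorIdx q.2 then 2 else 1) ≤ p.1)

/-- The rank of the coloured integer k_x in the total order
1_{ab} < 1_a < 1_b < 2_{ab} < 2_a < 2_b < ⋯. -/
def schurRank (k : ℤ) (x : SchurColor) : ℤ := 3 * k + schurColorIdx x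

/-- The generating polynomial G_{k_x}(q;a,b) for Schur-coloured partitions with largest
part at most k_x, as a (polynomial) multivariate power series in the variables
q (index 0), a (index 1), b (index 2): the coefficient of a^u b^v q^n is the number of
Schur-coloured partitions of n with statistics u, v and largest part at most k_x.
By convention it equals 0 for k < 0 (and it equals 1 for k = 0 since no coloured positive
integer is ≤ 0_x). -/
noncomputable def schurG (k : ℤ) (x : SchurColor) : MvPowerSeries (Fin 3) ℤ :=
  fun m => if k < 0 then 0 else
    (Nat.card {l : List (ℕ × SchurColor) // IsSchurColoured l ∧
      (∀ p ∈ l, schurRank p.1 p.2 ≤ schurRank k x) ∧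
      (l.map Prod.fst).sum = m 0 ∧
      l.countP (fun p => decide (p.2 = a ∨ p.2 = ab)) = m 1 ∧
      l.countP (fun p => decide (p.2 = b ∨ p.2 = ab)) = m 2} : ℤ)

/-!
A partition counted by `G_{k_{ab}}` either avoids `k_{ab}`, and then all its parts are at most
`(k-1)_b`, the predecessor of `k_{ab}`; or it contains `k_{ab}`, which is then its first part, and
since the part following an `ab` part is smaller by at least 2, removing it leaves exactly the
partitions with parts at most `(k-2)_b`. For `k = 1` the second class is empty because `1_{ab}` is
forbidden, matching `G_{(-1)_b} = 0`. The generating polynomials are finite sums of monomials over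
these classes, so the recursion is additivity of the sum over the disjoint union.
-/

instance : Fintype SchurColor where
  elems := {ab, a, b}
  complete x := by cases x <;> decide

open MvPowerSeries

lemma schurRank_lt_schurRank_of_lt {m n : ℕ} (x y : SchurColor) (h : m < n) :
    schurRank m x < schurRank n y := by
  cases x <;> cases y <;> simp only [schurRank, schurColorIdx] <;> omega

lemma schurRank_le_schurRank_b_iff {n : ℕ} {m : ℤ} (x : SchurColor) :
    schurRank n x ≤ schurRank m b ↔ n ≤ m := by
  cases x <;> simp only [schurRank, schurColorIdx] <;> omega

lemma schurRank_le_schurRank_ab_iff {k : ℕ} (p : ℕ × SchurColor) :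
    schurRank p.1 p.2 ≤ schurRank k ab ↔
      schurRank p.1 p.2 ≤ schurRank ((k : ℤ) - 1) b ∨ p = (k, ab) := by
  obtain ⟨n, x⟩ := p
  cases x <;>
    simp only [schurRank, schurColorIdx, Prod.mk.injEq, reduceCtorEq, and_true, and_false,
      or_false] <;>
    omega

lemma IsSchurColoured.pairwise {l : List (ℕ × SchurColor)} (h : IsSchurColoured l) :
    l.Pairwise (fun p q => q.1 < p.1) := by
  have : (l.map Prod.fst).IsChain (· > ·) :=
    List.isChain_map_of_isChain _ (fun p q hpq => by split at hpq <;> omega) h.2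
  exact List.pairwise_map.mp (List.isChain_iff_pairwise.mp this)

lemma IsSchurColoured.forall_head_iff {l : List (ℕ × SchurColor)} (h : IsSchurColoured l)
    {d k : ℕ} : (∀ p ∈ l.head?, p.1 + d ≤ k) ↔ ∀ p ∈ l, p.1 + d ≤ k := by
  cases l with
  | nil => simp
  | cons q t =>
    simp only [List.head?_cons, Option.mem_def, Option.some.injEq, forall_eq',
      List.forall_mem_cons, iff_self_and]
    intro hq p hp
    have := List.rel_of_pairwise_cons h.pairwise hp
    omega

lemma isSchurColoured_cons_ab_iff {k : ℕ} {l : List (ℕ × SchurColor)} :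
    IsSchurColoured ((k, ab) :: l) ↔
      2 ≤ k ∧ IsSchurColoured l ∧ ∀ p ∈ l, p.1 + 2 ≤ k := by
  constructor
  · intro h
    have hk : 0 < k ∧ ¬(k = 1 ∧ ab = ab) := h.1 _ List.mem_cons_self
    have hl : IsSchurColoured l :=
      ⟨fun p hp => h.1 p (List.mem_cons_of_mem _ hp), (List.isChain_cons.mp h.2).2⟩
    have hhead : ∀ p ∈ l.head?, p.1 + 2 ≤ k := by simpa using (List.isChain_cons.mp h.2).1
    exact ⟨by simp only [and_true] at hk; omega, hl, hl.forall_head_iff.mp hhead⟩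
  · rintro ⟨hk, hl, hlt⟩
    refine ⟨List.forall_mem_cons.mpr ⟨⟨by omega, by simp only [and_true]; omega⟩, hl.1⟩,
      List.isChain_cons.mpr ⟨?_, hl.2⟩⟩
    simpa using hl.forall_head_iff.mpr hlt

lemma finite_setOf_isSchurColoured (r : ℤ) :
    {l | IsSchurColoured l ∧ ∀ p ∈ l, schurRank p.1 p.2 ≤ r}.Finite := by
  refine Set.Finite.of_finite_image (f := List.toFinset)
    (((Finset.range (r.toNat + 1) ×ˢ Finset.univ).powerset.finite_toSet).subset ?_) ?_
  · rintro _ ⟨l, ⟨-, hr⟩, rfl⟩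
    simp only [Finset.coe_powerset, Set.mem_preimage, Set.mem_powerset_iff, Finset.coe_subset]
    intro p hp
    have := hr p (List.mem_toFinset.mp hp)
    simp only [schurRank] at this
    simp only [Finset.mem_product, Finset.mem_range, Finset.mem_univ, and_true]
    omega
  · intro l₁ h₁ l₂ h₂ heq
    have hnodup {l : List (ℕ × SchurColor)} (h : IsSchurColoured l) : l.Nodup :=
      h.pairwise.imp fun hpq hpq' => by rw [hpq'] at hpq; omega
    exact (List.perm_of_nodup_nodup_toFinset_eq (hnodup h₁.1) (hnodup h₂.1) heq).eq_of_pairwise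
      (fun p q _ _ hpq hqp => by omega) h₁.1.pairwise h₂.1.pairwise

noncomputable def schurPartitions (r : ℤ) : Finset (List (ℕ × SchurColor)) :=
  (finite_setOf_isSchurColoured r).toFinset

@[simp]
lemma mem_schurPartitions {r : ℤ} {l : List (ℕ × SchurColor)} :
    l ∈ schurPartitions r ↔ IsSchurColoured l ∧ ∀ p ∈ l, schurRank p.1 p.2 ≤ r := by
  simp [schurPartitions]

section

variable {k : ℕ} {l : List (ℕ × SchurColor)}

lemma eq_cons_tail_of_mem_schurPartitions {n : ℕ} {x : SchurColor}
    (hl : l ∈ schurPartitions (schurRank n x)) (hmem : (n, x) ∈ l) : l = (n, x) :: l.tail := by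
  obtain ⟨hsch, hrank⟩ := mem_schurPartitions.mp hl
  cases l with
  | nil => simp at hmem
  | cons p t =>
    obtain rfl | ht := List.mem_cons.mp hmem
    · rfl
    · have := schurRank_lt_schurRank_of_lt x p.2 (List.rel_of_pairwise_cons hsch.pairwise ht)
      exact absurd (hrank p List.mem_cons_self) this.not_ge

lemma ab_notMem_of_mem_schurPartitions_b
    (hl : l ∈ schurPartitions (schurRank ((k : ℤ) - 1) b)) : (k, ab) ∉ l := fun hmem => by
  have := (mem_schurPartitions.mp hl).2 _ hmem
  simp only [schurRank, schurColorIdx] at this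
  omega

lemma mem_schurPartitions_ab_iff_b (hl : (k, ab) ∉ l) :
    l ∈ schurPartitions (schurRank k ab) ↔
      l ∈ schurPartitions (schurRank ((k : ℤ) - 1) b) := by
  simp only [mem_schurPartitions]
  refine and_congr_right fun _ => forall₂_congr fun p hp => ?_
  rw [schurRank_le_schurRank_ab_iff, or_iff_left (ne_of_mem_of_not_mem hp hl)]

lemma cons_mem_schurPartitions_ab_iff :
    (k, ab) :: l ∈ schurPartitions (schurRank k ab) ↔
      2 ≤ k ∧ l ∈ schurPartitions (schurRank ((k : ℤ) - 2) b) := by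
  simp only [mem_schurPartitions, isSchurColoured_cons_ab_iff, List.forall_mem_cons, le_refl,
    true_and, schurRank_le_schurRank_b_iff]
  constructor
  · rintro ⟨⟨hk, hl, hlt⟩, -⟩
    exact ⟨hk, hl, fun p hp => by have := hlt p hp; omega⟩
  · rintro ⟨hk, hl, hlt⟩
    have hlt' (p) (hp : p ∈ l) : p.1 + 2 ≤ k := by have := hlt p hp; omega
    refine ⟨⟨hk, hl, hlt'⟩, fun p hp => (schurRank_lt_schurRank_of_lt _ _ ?_).le⟩
    have := hlt' p hp
    omega

lemma schurPartitions_ab_eq_of_lt_two (hk : k < 2) :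
    schurPartitions (schurRank k ab) = schurPartitions (schurRank ((k : ℤ) - 1) b) := by
  ext l
  constructor
  · intro hl
    refine (mem_schurPartitions_ab_iff_b fun hmem => ?_).mp hl
    have := (mem_schurPartitions.mp hl).1.1 _ hmem
    simp only [and_true] at this
    omega
  · intro hl
    exact (mem_schurPartitions_ab_iff_b (ab_notMem_of_mem_schurPartitions_b hl)).mpr hl

lemma schurPartitions_ab_eq_union (hk : 2 ≤ k) :
    schurPartitions (schurRank k ab) = schurPartitions (schurRank ((k : ℤ) - 1) b) ∪
      (schurPartitions (schurRank ((k : ℤ) - 2) b)).image (List.cons (k, ab)) := by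
  ext l
  simp only [Finset.mem_union, Finset.mem_image]
  constructor
  · intro hl
    by_cases hmem : (k, ab) ∈ l
    · have hcons := eq_cons_tail_of_mem_schurPartitions hl hmem
      rw [hcons, cons_mem_schurPartitions_ab_iff] at hl
      exact Or.inr ⟨l.tail, hl.2, hcons.symm⟩
    · exact Or.inl ((mem_schurPartitions_ab_iff_b hmem).mp hl)
  · rintro (hl | ⟨t, ht, rfl⟩)
    · exact (mem_schurPartitions_ab_iff_b (ab_notMem_of_mem_schurPartitions_b hl)).mpr hl
    · exact cons_mem_schurPartitions_ab_iff.mpr ⟨hk, ht⟩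

lemma disjoint_schurPartitions_b_image_cons_ab :
    Disjoint (schurPartitions (schurRank ((k : ℤ) - 1) b))
      ((schurPartitions (schurRank ((k : ℤ) - 2) b)).image (List.cons (k, ab))) := by
  refine Finset.disjoint_left.mpr fun _ hl hcons => ?_
  obtain ⟨t, -, rfl⟩ := Finset.mem_image.mp hcons
  exact ab_notMem_of_mem_schurPartitions_b hl List.mem_cons_self

end

noncomputable def schurWeight (l : List (ℕ × SchurColor)) : Fin 3 →₀ ℕ :=
  Finsupp.equivFunOnFinite.symm
    ![(l.map Prod.fst).sum, l.countP (fun p => decide (p.2 = a ∨ p.2 = ab)),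
      l.countP (fun p => decide (p.2 = b ∨ p.2 = ab))]

lemma schurWeight_eq_iff {l : List (ℕ × SchurColor)} {m : Fin 3 →₀ ℕ} :
    schurWeight l = m ↔ (l.map Prod.fst).sum = m 0 ∧
      l.countP (fun p => decide (p.2 = a ∨ p.2 = ab)) = m 1 ∧
      l.countP (fun p => decide (p.2 = b ∨ p.2 = ab)) = m 2 := by
  simp [Finsupp.ext_iff, Fin.forall_fin_succ, schurWeight]

lemma schurWeight_cons_ab (k : ℕ) (l : List (ℕ × SchurColor)) :
    schurWeight ((k, ab) :: l) =
      Finsupp.single 1 1 + Finsupp.single 2 1 + Finsupp.single 0 k + schurWeight l := by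
  ext i
  fin_cases i <;> simp [schurWeight, add_comm]

lemma monomial_schurWeight_cons_ab (k : ℕ) (l : List (ℕ × SchurColor)) :
    monomial (schurWeight ((k, ab) :: l)) (1 : ℤ) =
      X 1 * X 2 * X 0 ^ k * monomial (schurWeight l) 1 := by
  rw [schurWeight_cons_ab, X_def, X_def, X_pow_eq, monomial_mul_monomial, monomial_mul_monomial,
    monomial_mul_monomial]
  norm_num

lemma schurG_of_neg {k : ℤ} (hk : k < 0) (x : SchurColor) : schurG k x = 0 := by
  ext m
  rw [coeff_apply, schurG, if_pos hk, map_zero]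

lemma schurG_eq_sum {k : ℤ} (hk : 0 ≤ k) (x : SchurColor) :
    schurG k x = ∑ l ∈ schurPartitions (schurRank k x), monomial (schurWeight l) 1 := by
  ext m
  rw [map_sum, coeff_apply, schurG, if_neg hk.not_gt]
  simp only [coeff_monomial, Finset.sum_boole, ← Nat.card_eq_finsetCard]
  exact congrArg _ <| Nat.card_congr <| Equiv.subtypeEquivRight fun l => by
    simp only [Finset.mem_filter, mem_schurPartitions, eq_comm (a := m), schurWeight_eq_iff,
      and_assoc]

open MvPowerSeries in
/-- G_{k_{ab}}(q;a,b) = G_{(k−1)_b}(q;a,b) + a b q^k G_{(k−2)_b}(q;a,b) for k ≥ 1. -/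
theorem schurG_rec_ab (k : ℕ) (hk : 1 ≤ k) :
    schurG k SchurColor.ab =
      schurG ((k : ℤ) - 1) SchurColor.b +
        X 1 * X 2 * (X 0 : MvPowerSeries (Fin 3) ℤ) ^ k * schurG ((k : ℤ) - 2) SchurColor.b := by
  rw [schurG_eq_sum (by positivity), schurG_eq_sum (by omega)]
  obtain hk2 | hk2 := lt_or_ge k 2
  · rw [schurG_of_neg (by omega), mul_zero, add_zero, schurPartitions_ab_eq_of_lt_two hk2]
  · rw [schurG_eq_sum (by omega), schurPartitions_ab_eq_union hk2,
      Finset.sum_union disjoint_schurPartitions_b_image_cons_ab,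
      Finset.sum_image List.cons_injective.injOn, Finset.mul_sum]
    simp only [monomial_schurWeight_cons_ab]
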